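/- Let A and B be unital C*-algebras and let T : A_sa → B_sa be a real-linear bijection between their selfadjoint parts. Then T is an order isomorphism if and only if there exist a positive invertible element y ∈ B and a Jordan isomorphism J : A_sa → B_sa such that T(x) = y·J(x)·y for all x ∈ A_sa. Moreover, this decomposition is unique, and necessarily y = (T1)^{1/2}, the positive square root of T(1). -/

import Mathlib

/-- `J` is a Jordan isomorphism between the selfadjoint parts of the unital C*-algebras
`A` and `B`: a real-linear bijection `A_sa → B_sa` preserving the Jordan product
`x ∘ y = (xy + yx)/2`. -/
def IsJordanIsoSa {A B : Type*} [CStarAlgebra A] [CStarAlgebra B] (J : A → B) : Prop :=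
  Set.BijOn J {x : A | IsSelfAdjoint x} {y : B | IsSelfAdjoint y} ∧
    (∀ x y : A, IsSelfAdjoint x → IsSelfAdjoint y → J (x + y) = J x + J y) ∧
    (∀ (t : ℝ) (x : A), IsSelfAdjoint x → J (t • x) = t • J x) ∧
    (∀ x y : A, IsSelfAdjoint x → IsSelfAdjoint y →
      J ((2 : ℝ)⁻¹ • (x * y + y * x)) = (2 : ℝ)⁻¹ • (J x * J y + J y * J x))

/-!
Kadison's inequality `Φ x * Φ x ≤ Φ (x * x)` holds for every unital positive real-linear map `Φ`
between selfadjoint parts of C⋆-algebras. Transport the Bernstein basis of degree `n` from `[0, 1]`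
to an interval `[-r, r]` containing the spectrum of `x`, with nodes `c ν = -r + 2 r ν / n`, and
evaluate it at `x`: this gives positive elements `p ν` with `∑ p ν = 1`, `∑ c ν • p ν = x` and
`∑ c ν ^ 2 • p ν ≤ x * x + (r ^ 2 / n) • 1`. Their images `q ν = Φ (p ν)` again sum to `1`, and
expanding `0 ≤ ∑ (c ν - b) q ν (c ν - b)` at `b = ∑ c ν • q ν` gives `b * b ≤ ∑ c ν ^ 2 • q ν`.

If `T` is an order isomorphism, then `T 1` is invertible, `y = √(T 1)`, and `J = y⁻¹ T(·) y⁻¹` is a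
unital order isomorphism. Kadison's inequality for `J` and for `J⁻¹` forces `J (x * x) = J x * J x`,
and polarization makes `J` a Jordan map. Conversely a Jordan isomorphism maps squares of
selfadjoint elements onto squares, so it preserves positivity; and `J 1 = 1` forces `y * y = T 1`,
which pins down `y` and then `J`.
-/

open Polynomial Finset

lemma IsSelfAdjoint.mul_self {R : Type*} [Mul R] [StarMul R] {a : R} (ha : IsSelfAdjoint a) :
    IsSelfAdjoint (a * a) := by
  simpa only [ha.star_eq] using IsSelfAdjoint.star_mul_self a

section Bernstein

lemma sum_eval_bernsteinPolynomial (n : ℕ) (s : ℝ) :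
    ∑ ν ∈ range (n + 1), (bernsteinPolynomial ℝ n ν).eval s = 1 := by
  simpa [eval_finsetSum] using congr(eval s $(bernsteinPolynomial.sum ℝ n))

lemma sum_mul_eval_bernsteinPolynomial (n : ℕ) (s : ℝ) :
    ∑ ν ∈ range (n + 1), (ν : ℝ) * (bernsteinPolynomial ℝ n ν).eval s = n * s := by
  simpa [eval_finsetSum] using congr(eval s $(bernsteinPolynomial.sum_smul ℝ n))

lemma sum_sq_mul_eval_bernsteinPolynomial (n : ℕ) (s : ℝ) :
    ∑ ν ∈ range (n + 1), (ν : ℝ) ^ 2 * (bernsteinPolynomial ℝ n ν).eval s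
      = n * (n - 1) * s ^ 2 + n * s := by
  have hcast (m : ℕ) : (m : ℝ) * ↑(m - 1) = m * (m - 1) := by rcases m with _ | m <;> simp
  have h := congr(eval s $(bernsteinPolynomial.sum_mul_smul ℝ n))
  simp only [eval_finsetSum, nsmul_eq_mul, eval_mul, eval_natCast, eval_pow, eval_X,
    Nat.cast_mul, hcast] at h
  rw [← h, ← sum_mul_eval_bernsteinPolynomial n s, ← sum_add_distrib]
  exact sum_congr rfl fun ν _ => by ring

lemma sum_affine_mul_eval_bernsteinPolynomial (n : ℕ) (s α β : ℝ) :
    ∑ ν ∈ range (n + 1), (α * ν - β) * (bernsteinPolynomial ℝ n ν).eval s = α * n * s - β := by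
  simp only [sub_mul, mul_assoc, sum_sub_distrib, ← mul_sum, sum_mul_eval_bernsteinPolynomial,
    sum_eval_bernsteinPolynomial]
  ring

lemma sum_affine_sq_mul_eval_bernsteinPolynomial (n : ℕ) (s α β : ℝ) :
    ∑ ν ∈ range (n + 1), (α * ν - β) ^ 2 * (bernsteinPolynomial ℝ n ν).eval s
      = α ^ 2 * (n * (n - 1) * s ^ 2 + n * s) - 2 * α * β * n * s + β ^ 2 := by
  have h (ν : ℕ) : (α * ν - β) ^ 2 * (bernsteinPolynomial ℝ n ν).eval s
      = α ^ 2 * ((ν : ℝ) ^ 2 * (bernsteinPolynomial ℝ n ν).eval s)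
        - 2 * α * β * ((ν : ℝ) * (bernsteinPolynomial ℝ n ν).eval s)
        + β ^ 2 * (bernsteinPolynomial ℝ n ν).eval s := by ring
  simp only [h, sum_add_distrib, sum_sub_distrib, ← mul_sum, sum_sq_mul_eval_bernsteinPolynomial,
    sum_mul_eval_bernsteinPolynomial, sum_eval_bernsteinPolynomial]
  ring

noncomputable def bernsteinOn (r : ℝ) (n ν : ℕ) : ℝ[X] :=
  (bernsteinPolynomial ℝ n ν).comp (C (2 * r)⁻¹ * (X + C r))

lemma eval_bernsteinOn (r t : ℝ) (n ν : ℕ) :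
    (bernsteinOn r n ν).eval t = (bernsteinPolynomial ℝ n ν).eval ((t + r) / (2 * r)) := by
  simp [bernsteinOn, div_eq_inv_mul]

lemma sum_bernsteinOn (r : ℝ) (n : ℕ) : ∑ ν ∈ range (n + 1), bernsteinOn r n ν = 1 :=
  Polynomial.funext fun t => by
    simp [eval_finsetSum, eval_bernsteinOn, sum_eval_bernsteinPolynomial]

lemma sum_smul_bernsteinOn {r : ℝ} (hr : r ≠ 0) {n : ℕ} (hn : n ≠ 0) :
    ∑ ν ∈ range (n + 1), (2 * r / n * ν - r) • bernsteinOn r n ν = X :=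
  Polynomial.funext fun t => by
    simp only [eval_finsetSum, eval_smul, smul_eq_mul, eval_bernsteinOn, eval_X,
      sum_affine_mul_eval_bernsteinPolynomial]
    field_simp
    ring

lemma sum_sq_smul_bernsteinOn {r : ℝ} (hr : r ≠ 0) {n : ℕ} (hn : n ≠ 0) :
    ∑ ν ∈ range (n + 1), (2 * r / n * ν - r) ^ 2 • bernsteinOn r n ν
      = (1 - (n : ℝ)⁻¹) • X ^ 2 + (r ^ 2 / n) • 1 :=
  Polynomial.funext fun t => by
    simp only [eval_finsetSum, eval_smul, smul_eq_mul, eval_bernsteinOn, eval_add, eval_pow,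
      eval_X, eval_one, sum_affine_sq_mul_eval_bernsteinPolynomial]
    field_simp
    ring

lemma eval_bernsteinOn_nonneg {r t : ℝ} (hr : 0 < r) (ht : |t| ≤ r) (n ν : ℕ) :
    0 ≤ (bernsteinOn r n ν).eval t := by
  obtain ⟨hlo, hhi⟩ := abs_le.mp ht
  have hs₀ : 0 ≤ (t + r) / (2 * r) := div_nonneg (by linarith) (by linarith)
  have hs₁ : 0 ≤ 1 - (t + r) / (2 * r) := by
    rw [sub_nonneg, div_le_one (by linarith)]; linarith
  rw [eval_bernsteinOn]
  simp only [bernsteinPolynomial, eval_mul, eval_pow, eval_natCast, eval_sub, eval_one, eval_X]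
  positivity

end Bernstein

lemma IsSelfAdjoint.exists_partition_of_unity {A : Type*} [CStarAlgebra A] [PartialOrder A]
    [StarOrderedRing A] {x : A} (hx : IsSelfAdjoint x) {ε : ℝ} (hε : 0 < ε) :
    ∃ (n : ℕ) (p : ℕ → A) (c : ℕ → ℝ), (∀ ν, 0 ≤ p ν) ∧ ∑ ν ∈ range (n + 1), p ν = 1 ∧
      ∑ ν ∈ range (n + 1), c ν • p ν = x ∧ ∑ ν ∈ range (n + 1), c ν ^ 2 • p ν ≤ x * x + ε • 1 := by
  set r := ‖x‖ + 1
  have hr : 0 < r := by positivity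
  obtain ⟨n, hn⟩ := exists_nat_gt (r ^ 2 / ε)
  have hn₀ : (0 : ℝ) < n := lt_of_le_of_lt (by positivity) hn
  refine ⟨n, fun ν => aeval x (bernsteinOn r n ν), fun ν => 2 * r / n * ν - r,
    fun ν => ?_, ?_, ?_, ?_⟩ <;> beta_reduce
  · nontriviality A
    rw [← cfc_polynomial (bernsteinOn r n ν) x]
    refine cfc_nonneg fun t ht => eval_bernsteinOn_nonneg hr ?_ n ν
    have := spectrum.norm_le_norm_of_mem ht
    rw [Real.norm_eq_abs] at this
    linarith
  · rw [← map_sum, sum_bernsteinOn, map_one]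
  · simp_rw [← map_smul, ← map_sum]
    rw [sum_smul_bernsteinOn hr.ne' (by exact_mod_cast hn₀.ne'), aeval_X]
  · simp_rw [← map_smul, ← map_sum]
    rw [sum_sq_smul_bernsteinOn hr.ne' (by exact_mod_cast hn₀.ne')]
    simp only [map_add, map_smul, map_pow, aeval_X, map_one]
    gcongr
    · rw [← sub_nonneg, sq, show x * x - (1 - (n : ℝ)⁻¹) • (x * x) = (n : ℝ)⁻¹ • (x * x) by module]
      exact smul_nonneg (by positivity) hx.mul_self_nonneg
    · rw [div_le_iff₀ hn₀]
      rw [div_lt_iff₀ hε] at hn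
      linarith

lemma mul_self_sum_smul_le_sum_sq_smul {B ι : Type*} [Ring B] [StarRing B] [PartialOrder B]
    [StarOrderedRing B] [Algebra ℝ B] [StarModule ℝ B] (s : Finset ι) {q : ι → B} (c : ι → ℝ)
    (hq : ∀ i ∈ s, 0 ≤ q i) (hsum : ∑ i ∈ s, q i = 1) :
    (∑ i ∈ s, c i • q i) * (∑ i ∈ s, c i • q i) ≤ ∑ i ∈ s, c i ^ 2 • q i := by
  set b := ∑ i ∈ s, c i • q i
  have hb : IsSelfAdjoint b :=
    isSelfAdjoint_sum s fun i hi => (IsSelfAdjoint.all (c i)).smul (.of_nonneg (hq i hi))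
  have hexpand (i : ι) : (c i • 1 - b) * q i * (c i • 1 - b)
      = c i ^ 2 • q i - c i • q i * b - b * (c i • q i) + b * q i * b := by
    simp only [sub_mul, mul_sub, smul_mul_assoc, mul_smul_comm, one_mul, mul_one]
    module
  have hvariance : ∑ i ∈ s, (c i • 1 - b) * q i * (c i • 1 - b)
      = ∑ i ∈ s, c i ^ 2 • q i - b * b := by
    simp only [hexpand, sum_add_distrib, sum_sub_distrib, ← sum_mul, ← mul_sum, hsum]
    noncomm_ring
  have hnonneg : 0 ≤ ∑ i ∈ s, (c i • 1 - b) * q i * (c i • 1 - b) :=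
    sum_nonneg fun i hi => IsSelfAdjoint.conjugate_nonneg (hq i hi)
      (((IsSelfAdjoint.all (c i)).smul (IsSelfAdjoint.one B)).sub hb)
  rw [hvariance] at hnonneg
  exact sub_nonneg.mp hnonneg

lemma le_of_forall_pos_le_add_smul {M : Type*} [AddCommGroup M] [Module ℝ M] [TopologicalSpace M]
    [ContinuousAdd M] [ContinuousSMul ℝ M] [Preorder M] [ClosedIciTopology M] {a b e : M}
    (h : ∀ ε : ℝ, 0 < ε → a ≤ b + ε • e) : a ≤ b := by
  have hlim : Filter.Tendsto (fun ε : ℝ => b + ε • e) (nhdsWithin 0 (Set.Ioi 0)) (nhds b) := by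
    have hcont : Continuous fun ε : ℝ => b + ε • e := by fun_prop
    have := hcont.tendsto 0
    simp only [zero_smul, add_zero] at this
    exact this.mono_left nhdsWithin_le_nhds
  exact ge_of_tendsto hlim (eventually_nhdsWithin_of_forall h)

structure IsSaLinear {A B : Type*} [Add A] [Star A] [SMul ℝ A] [Add B] [SMul ℝ B] (Φ : A → B) :
    Prop where
  map_add : ∀ x y : A, IsSelfAdjoint x → IsSelfAdjoint y → Φ (x + y) = Φ x + Φ y
  map_smul : ∀ (t : ℝ) (x : A), IsSelfAdjoint x → Φ (t • x) = t • Φ x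

namespace IsSaLinear

section Module

variable {A B : Type*} [AddCommGroup A] [StarAddMonoid A] [Module ℝ A] [AddCommGroup B] [Module ℝ B]
  {Φ : A → B}

lemma map_zero (hΦ : IsSaLinear Φ) : Φ 0 = 0 := by
  simpa using hΦ.map_smul 0 0 (IsSelfAdjoint.zero A)

lemma map_sub [StarModule ℝ A] (hΦ : IsSaLinear Φ) {x y : A} (hx : IsSelfAdjoint x)
    (hy : IsSelfAdjoint y) : Φ (x - y) = Φ x - Φ y := by
  have hy' : IsSelfAdjoint ((-1 : ℝ) • y) := (IsSelfAdjoint.all _).smul hy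
  calc Φ (x - y) = Φ (x + (-1 : ℝ) • y) := by rw [neg_one_smul, sub_eq_add_neg]
    _ = Φ x + (-1 : ℝ) • Φ y := by rw [hΦ.map_add _ _ hx hy', hΦ.map_smul _ _ hy]
    _ = Φ x - Φ y := by rw [neg_one_smul, sub_eq_add_neg]

lemma map_sum (hΦ : IsSaLinear Φ) {ι : Type*} (s : Finset ι) {x : ι → A}
    (hx : ∀ i ∈ s, IsSelfAdjoint (x i)) : Φ (∑ i ∈ s, x i) = ∑ i ∈ s, Φ (x i) := by
  classical
  induction s using Finset.induction_on with
  | empty => simpa using hΦ.map_zero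
  | insert i s hi ih =>
    rw [sum_insert hi, sum_insert hi, hΦ.map_add _ _ (hx i (mem_insert_self i s))
      (isSelfAdjoint_sum s fun j hj => hx j (mem_insert_of_mem hj)),
      ih fun j hj => hx j (mem_insert_of_mem hj)]

lemma map_le_map [StarModule ℝ A] [PartialOrder A] [IsOrderedAddMonoid A] [PartialOrder B]
    [IsOrderedAddMonoid B]
    (hΦ : IsSaLinear Φ) (hpos : ∀ x, IsSelfAdjoint x → 0 ≤ x → 0 ≤ Φ x) {x y : A}
    (hx : IsSelfAdjoint x) (hy : IsSelfAdjoint y) (hxy : x ≤ y) : Φ x ≤ Φ y := by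
  have := hpos _ (hy.sub hx) (sub_nonneg.mpr hxy)
  rwa [hΦ.map_sub hy hx, sub_nonneg] at this

lemma of_invOn [StarAddMonoid B] [StarModule ℝ A] [StarModule ℝ B] (hΦ : IsSaLinear Φ)
    {Ψ : B → A} (hinv : Set.InvOn Ψ Φ {x | IsSelfAdjoint x} {y | IsSelfAdjoint y})
    (hΨ : Set.MapsTo Ψ {y | IsSelfAdjoint y} {x | IsSelfAdjoint x}) : IsSaLinear Ψ where
  map_add b b' hb hb' := hinv.1.injOn (hΨ (hb.add hb')) ((hΨ hb).add (hΨ hb')) <| by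
    rw [hΦ.map_add _ _ (hΨ hb) (hΨ hb'), hinv.2 (hb.add hb'), hinv.2 hb, hinv.2 hb']
  map_smul t b hb := hinv.1.injOn (hΨ ((IsSelfAdjoint.all t).smul hb))
      ((IsSelfAdjoint.all t).smul (hΨ hb)) <| by
    rw [hΦ.map_smul _ _ (hΨ hb), hinv.2 ((IsSelfAdjoint.all t).smul hb), hinv.2 hb]

end Module

lemma conj {A B : Type*} [Add A] [Star A] [SMul ℝ A] [Ring B] [Algebra ℝ B] {Φ : A → B}
    (hΦ : IsSaLinear Φ) (z : B) : IsSaLinear fun x => z * Φ x * z where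
  map_add x y hx hy := by simp only [hΦ.map_add x y hx hy, mul_add, add_mul]
  map_smul t x hx := by simp only [hΦ.map_smul t x hx, mul_smul_comm, smul_mul_assoc]

section CStarAlgebra

variable {A B : Type*} [CStarAlgebra A] [PartialOrder A] [StarOrderedRing A]
  [CStarAlgebra B] [PartialOrder B] [StarOrderedRing B] {Φ : A → B}

theorem mul_self_le_map_mul_self (hΦ : IsSaLinear Φ)
    (hpos : ∀ x, IsSelfAdjoint x → 0 ≤ x → 0 ≤ Φ x) (hone : Φ 1 = 1) {x : A}
    (hx : IsSelfAdjoint x) : Φ x * Φ x ≤ Φ (x * x) := by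
  refine le_of_forall_pos_le_add_smul (e := (1 : B)) fun ε hε => ?_
  obtain ⟨n, p, c, hp, hsum, hmean, hvar⟩ := hx.exists_partition_of_unity hε
  have hpsa (ν : ℕ) : IsSelfAdjoint (p ν) := .of_nonneg (hp ν)
  have hmap (d : ℕ → ℝ) :
      Φ (∑ ν ∈ range (n + 1), d ν • p ν) = ∑ ν ∈ range (n + 1), d ν • Φ (p ν) := by
    rw [hΦ.map_sum _ fun ν _ => (IsSelfAdjoint.all _).smul (hpsa ν)]
    exact sum_congr rfl fun ν _ => hΦ.map_smul _ _ (hpsa ν)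
  calc Φ x * Φ x
      = (∑ ν ∈ range (n + 1), c ν • Φ (p ν)) * ∑ ν ∈ range (n + 1), c ν • Φ (p ν) := by
        rw [← hmap, hmean]
    _ ≤ ∑ ν ∈ range (n + 1), c ν ^ 2 • Φ (p ν) :=
        mul_self_sum_smul_le_sum_sq_smul _ c (fun ν _ => hpos _ (hpsa ν) (hp ν))
          (by rw [← hΦ.map_sum _ fun ν _ => hpsa ν, hsum, hone])
    _ = Φ (∑ ν ∈ range (n + 1), c ν ^ 2 • p ν) := (hmap _).symm
    _ ≤ Φ (x * x + ε • 1) :=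
        hΦ.map_le_map hpos (isSelfAdjoint_sum _ fun ν _ => (IsSelfAdjoint.all _).smul (hpsa ν))
          (hx.mul_self.add ((IsSelfAdjoint.all ε).smul (.one A))) hvar
    _ = Φ (x * x) + ε • 1 := by
        rw [hΦ.map_add _ _ hx.mul_self ((IsSelfAdjoint.all ε).smul (.one A)),
          hΦ.map_smul _ _ (.one A), hone]

end CStarAlgebra

end IsSaLinear

section Jordan

lemma IsSaLinear.map_jordan_of_map_mul_self {A B : Type*} [Ring A] [StarRing A] [Module ℝ A]
    [StarModule ℝ A] [Ring B] [Module ℝ B] {Φ : A → B} (hΦ : IsSaLinear Φ)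
    (hsq : ∀ x, IsSelfAdjoint x → Φ (x * x) = Φ x * Φ x) {x y : A} (hx : IsSelfAdjoint x)
    (hy : IsSelfAdjoint y) :
    Φ ((2 : ℝ)⁻¹ • (x * y + y * x)) = (2 : ℝ)⁻¹ • (Φ x * Φ y + Φ y * Φ x) := by
  have hpolar : x * y + y * x = (x + y) * (x + y) - x * x - y * y := by noncomm_ring
  have hs := (hx.add hy).mul_self
  rw [hpolar, hΦ.map_smul _ _ ((hs.sub hx.mul_self).sub hy.mul_self),
    hΦ.map_sub (hs.sub hx.mul_self) hy.mul_self, hΦ.map_sub hs hx.mul_self,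
    hsq _ (hx.add hy), hsq _ hx, hsq _ hy, hΦ.map_add _ _ hx hy]
  noncomm_ring

variable {A B : Type*} [CStarAlgebra A] [CStarAlgebra B]

lemma IsJordanIsoSa.map_mul_self {J : A → B} (hJ : IsJordanIsoSa J) {x : A}
    (hx : IsSelfAdjoint x) : J (x * x) = J x * J x := by
  have h := hJ.2.2.2 x x hx hx
  rwa [← two_smul ℝ (x * x), ← two_smul ℝ (J x * J x), inv_smul_smul₀ two_ne_zero,
    inv_smul_smul₀ two_ne_zero] at h

lemma IsJordanIsoSa.map_one {J : A → B} (hJ : IsJordanIsoSa J) : J 1 = 1 := by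
  obtain ⟨u, hu, hJu⟩ := hJ.1.surjOn (IsSelfAdjoint.one B)
  have h := hJ.2.2.2 1 u (.one A) hu
  rw [one_mul, mul_one, ← two_smul ℝ u, inv_smul_smul₀ two_ne_zero, hJu, mul_one, one_mul,
    ← two_smul ℝ (J 1), inv_smul_smul₀ two_ne_zero] at h
  exact h.symm

lemma IsJordanIsoSa.eq_sqrt_of_forall_eq [PartialOrder B] [StarOrderedRing B] {T J : A → B}
    (hJ : IsJordanIsoSa J) {y : B} (hy : 0 ≤ y)
    (hTJ : ∀ x, IsSelfAdjoint x → T x = y * J x * y) : y = CFC.sqrt (T 1) := by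
  rw [hTJ 1 (.one A), hJ.map_one, mul_one]
  exact (CFC.sqrt_unique rfl hy).symm

variable [PartialOrder A] [StarOrderedRing A] [PartialOrder B] [StarOrderedRing B]

theorem IsSaLinear.isJordanIsoSa {J : A → B} (hJ : IsSaLinear J)
    (hbij : Set.BijOn J {x | IsSelfAdjoint x} {y | IsSelfAdjoint y})
    (hpos : ∀ x, IsSelfAdjoint x → (0 ≤ x ↔ 0 ≤ J x)) (hone : J 1 = 1) : IsJordanIsoSa J := by
  set K := Function.invFunOn J {x : A | IsSelfAdjoint x}
  have hinv : Set.InvOn K J _ _ := hbij.invOn_invFunOn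
  have hKmaps : Set.MapsTo K _ _ := (hbij.symm hinv.symm).mapsTo
  have hK : IsSaLinear K := hJ.of_invOn hinv hKmaps
  have hJpos x hx := (hpos x hx).1
  have hKpos (b : B) (hb : IsSelfAdjoint b) (h : 0 ≤ b) : 0 ≤ K b :=
    (hpos _ (hKmaps hb)).2 (by rwa [hinv.2 hb])
  have hKone : K 1 = 1 := by simpa [hone] using hinv.1 (IsSelfAdjoint.one A)
  have hsq (x : A) (hx : IsSelfAdjoint x) : J (x * x) = J x * J x := by
    have hJx : IsSelfAdjoint (J x) := hbij.mapsTo hx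
    refine le_antisymm ?_ (hJ.mul_self_le_map_mul_self hJpos hone hx)
    have h := hK.mul_self_le_map_mul_self hKpos hKone hJx
    rw [hinv.1 hx] at h
    simpa only [hinv.2 hJx.mul_self] using hJ.map_le_map hJpos hx.mul_self (hKmaps hJx.mul_self) h
  exact ⟨hbij, hJ.map_add, hJ.map_smul, fun x y hx hy => hJ.map_jordan_of_map_mul_self hsq hx hy⟩

lemma IsJordanIsoSa.nonneg_iff {J : A → B} (hJ : IsJordanIsoSa J) {x : A}
    (hx : IsSelfAdjoint x) : 0 ≤ x ↔ 0 ≤ J x := by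
  simp only [CStarAlgebra.nonneg_iff_exists_isSelfAdjoint_and_eq_mul_self]
  constructor
  · rintro ⟨s, hs, rfl⟩
    exact ⟨J s, hJ.1.mapsTo hs, hJ.map_mul_self hs⟩
  · rintro ⟨t, ht, hJx⟩
    obtain ⟨s, hs, rfl⟩ := hJ.1.surjOn ht
    exact ⟨s, hs, hJ.1.injOn hx hs.mul_self (hJx.trans (hJ.map_mul_self hs).symm)⟩

lemma IsJordanIsoSa.nonneg_iff_conj {J : A → B} (hJ : IsJordanIsoSa J) {y : B}
    (hy : IsSelfAdjoint y) (hyu : IsUnit y) {x : A} (hx : IsSelfAdjoint x) :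
    0 ≤ x ↔ 0 ≤ y * J x * y := by
  rw [hJ.nonneg_iff hx, ← hyu.star_left_conjugate_nonneg_iff, hy.star_eq]

lemma IsSaLinear.isStrictlyPositive_map_one {T : A → B} (hT : IsSaLinear T)
    (hpos : ∀ x, IsSelfAdjoint x → 0 ≤ x → 0 ≤ T x) {a : A} (ha : IsSelfAdjoint a)
    (haT : T a = 1) : IsStrictlyPositive (T 1) := by
  have hle : 1 ≤ ‖a‖ • T 1 := by
    rw [← haT, ← hT.map_smul _ _ (.one A)]
    refine hT.map_le_map hpos ha ((IsSelfAdjoint.all _).smul (.one A)) ?_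
    simpa [Algebra.algebraMap_eq_smul_one] using ha.le_algebraMap_norm_self
  have hunit : IsUnit (algebraMap ℝ B ‖a‖ * T 1) := by
    rw [← Algebra.smul_def]
    exact CStarAlgebra.isUnit_of_le 1 hle isStrictlyPositive_one
  exact ((Algebra.commute_algebraMap_left _ _).isUnit_mul_iff.mp hunit).2.isStrictlyPositive
    (hpos 1 (.one A) zero_le_one)

theorem exists_eq_conj_jordan_of_order_iso {T : A → B} (hT : IsSaLinear T)
    (hbij : Set.BijOn T {x | IsSelfAdjoint x} {y | IsSelfAdjoint y})
    (hpos : ∀ x, IsSelfAdjoint x → (0 ≤ x ↔ 0 ≤ T x)) :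
    ∃ (y : B) (J : A → B), 0 ≤ y ∧ IsUnit y ∧ IsJordanIsoSa J ∧
      ∀ x, IsSelfAdjoint x → T x = y * J x * y := by
  obtain ⟨a, ha, haT⟩ := hbij.surjOn (IsSelfAdjoint.one B)
  have hT1 := hT.isStrictlyPositive_map_one (fun x hx => (hpos x hx).1) ha haT
  set y := CFC.sqrt (T 1)
  have hy : IsStrictlyPositive y := hT1.sqrt
  set z := Ring.inverse y
  have hyz : y * z = 1 := Ring.mul_inverse_cancel y hy.isUnit
  have hzy : z * y = 1 := Ring.inverse_mul_cancel y hy.isUnit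
  have hz : IsSelfAdjoint z := hy.isSelfAdjoint.ringInverse
  have hzu : IsUnit z := isUnit_ringInverse.mpr hy.isUnit
  have hcancel (u v : B) (huv : u * v = 1) (hvu : v * u = 1) (w : B) :
      u * (v * w * v) * u = w := by
    simp only [← mul_assoc, huv, one_mul]
    rw [mul_assoc, hvu, mul_one]
  have hconj : Set.BijOn (fun w => z * w * z) {w | IsSelfAdjoint w} {w | IsSelfAdjoint w} :=
    Set.InvOn.bijOn (f' := fun w => y * w * y)
      ⟨fun w _ => hcancel y z hyz hzy w, fun w _ => hcancel z y hzy hyz w⟩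
      (fun _ hw => IsSelfAdjoint.conjugate_self hw hz)
      (fun _ hw => IsSelfAdjoint.conjugate_self hw hy.isSelfAdjoint)
  have hJpos (x : A) (hx : IsSelfAdjoint x) : 0 ≤ x ↔ 0 ≤ z * T x * z := by
    rw [hpos x hx, ← hzu.star_left_conjugate_nonneg_iff, hz.star_eq]
  have hJone : z * T 1 * z = 1 := by
    have hysq : y * y = T 1 := CFC.sqrt_mul_sqrt_self (T 1) hT1.nonneg
    simpa only [mul_one, hysq] using hcancel z y hzy hyz 1
  exact ⟨y, fun x => z * T x * z, hy.nonneg, hy.isUnit,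
    (hT.conj z).isJordanIsoSa (hconj.comp hbij) hJpos hJone,
    fun x _ => (hcancel y z hyz hzy _).symm⟩

end Jordan

/-- A real-linear bijection `T` between the selfadjoint parts of unital
C*-algebras is an order isomorphism iff `T x = y * J x * y` for a positive invertible `y`
and a Jordan isomorphism `J`; the decomposition is unique and `y` is the positive square
root of `T 1`. -/
theorem order_iso_iff_Uy_jordan_decomposition
    {A B : Type*} [CStarAlgebra A] [PartialOrder A] [StarOrderedRing A]
    [CStarAlgebra B] [PartialOrder B] [StarOrderedRing B]
    (T : A → B)
    (hbij : Set.BijOn T {x : A | IsSelfAdjoint x} {y : B | IsSelfAdjoint y})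
    (hadd : ∀ x y : A, IsSelfAdjoint x → IsSelfAdjoint y → T (x + y) = T x + T y)
    (hsmul : ∀ (t : ℝ) (x : A), IsSelfAdjoint x → T (t • x) = t • T x) :
    ((∀ x : A, IsSelfAdjoint x → (0 ≤ x ↔ 0 ≤ T x)) ↔
        ∃ (y : B) (J : A → B), 0 ≤ y ∧ IsUnit y ∧ IsJordanIsoSa J ∧
          (∀ x : A, IsSelfAdjoint x → T x = y * J x * y)) ∧
      (∀ (y₁ y₂ : B) (J₁ J₂ : A → B),
        0 ≤ y₁ → IsUnit y₁ → IsJordanIsoSa J₁ →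
          (∀ x : A, IsSelfAdjoint x → T x = y₁ * J₁ x * y₁) →
        0 ≤ y₂ → IsUnit y₂ → IsJordanIsoSa J₂ →
          (∀ x : A, IsSelfAdjoint x → T x = y₂ * J₂ x * y₂) →
        y₁ = y₂ ∧ ∀ x : A, IsSelfAdjoint x → J₁ x = J₂ x) ∧
      (∀ (y : B) (J : A → B), 0 ≤ y → IsUnit y → IsJordanIsoSa J →
        (∀ x : A, IsSelfAdjoint x → T x = y * J x * y) → y = CFC.sqrt (T 1)) := by
  refine ⟨⟨exists_eq_conj_jordan_of_order_iso ⟨hadd, hsmul⟩ hbij, ?_⟩, ?_,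
    fun y J hy _ hJ hTJ => hJ.eq_sqrt_of_forall_eq hy hTJ⟩
  · rintro ⟨y, J, hy, hyu, hJ, hTJ⟩ x hx
    rw [hTJ x hx]
    exact hJ.nonneg_iff_conj hy.isSelfAdjoint hyu hx
  · intro y₁ y₂ J₁ J₂ hy₁ hyu₁ hJ₁ hT₁ hy₂ _ hJ₂ hT₂
    obtain rfl : y₁ = y₂ :=
      (hJ₁.eq_sqrt_of_forall_eq hy₁ hT₁).trans (hJ₂.eq_sqrt_of_forall_eq hy₂ hT₂).symm
    exact ⟨rfl, fun x hx =>
      hyu₁.mul_left_cancel (hyu₁.mul_right_cancel ((hT₁ x hx).symm.trans (hT₂ x hx)))⟩
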